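/- Uniform Exploration with per-arm exploration budget N := T^{2/3}(log T)^{1/3} achieves expected weak external regret O(T^{2/3}(log T)^{1/3}): specifically, conditional on the clean event the regret is at most K·N + 2T·√((2 log T)/N), and accounting for the failure probability adds at most o(T^{2/3}). -/

import Mathlib

open MeasureTheory ProbabilityTheory Finset

/-!
On the clean event both the optimal arm and the selected arm have empirical means within `ρ̄_N`
of their true means, and the selected arm has the larger empirical mean, so its gap is at most
`2ρ̄_N`; since every gap is at most `1`, the exploration phase costs at most `K·N` and the
exploitation phase at most `2T·ρ̄_N`. Off the clean event the regret is still at most `T`, and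
this event has probability at most `2K/T⁴`, which contributes at most `2K/T³` to the expectation.
-/

lemma sub_le_two_mul_of_abs_sub_le_of_le {x y x' y' ρ : ℝ} (hx : |x' - x| ≤ ρ)
    (hy : |y' - y| ≤ ρ) (hxy : x' ≤ y') : x - y ≤ 2 * ρ := by
  linarith [(abs_le.mp hx).1, (abs_le.mp hy).2]

lemma sum_sub_le_card {A : Type*} [Fintype A] {μ : A → ℝ} (hrange : ∀ a, μ a ∈ Set.Icc (0 : ℝ) 1)
    (b : A) : ∑ a, (μ b - μ a) ≤ Fintype.card A := by
  simpa using Finset.sum_le_card_nsmul univ (fun a => μ b - μ a) 1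
    fun a _ => by linarith [(hrange b).2, (hrange a).1]

lemma regret_le_card_mul_add_mul {A : Type*} [Fintype A] {μ : A → ℝ}
    (hrange : ∀ a, μ a ∈ Set.Icc (0 : ℝ) 1) {N T δ : ℝ} (hN : 0 ≤ N)
    (hKN : (Fintype.card A : ℝ) * N ≤ T) {a b : A} (hab : μ a ≤ μ b) (hδ : μ b - μ a ≤ δ) :
    N * ∑ c, (μ b - μ c) + (T - Fintype.card A * N) * (μ b - μ a) ≤
      Fintype.card A * N + T * δ := by
  have hKN0 : 0 ≤ (Fintype.card A : ℝ) * N := mul_nonneg (Nat.cast_nonneg _) hN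
  have hδ0 : 0 ≤ δ := by linarith
  calc N * ∑ c, (μ b - μ c) + (T - Fintype.card A * N) * (μ b - μ a)
      ≤ N * Fintype.card A + (T - Fintype.card A * N) * δ := by
        gcongr
        exact sum_sub_le_card hrange b
    _ ≤ Fintype.card A * N + T * δ := by nlinarith

lemma integral_le_add_mul_measureReal_compl {Ω : Type*} [MeasurableSpace Ω] {P : Measure Ω}
    [IsProbabilityMeasure P] {f : Ω → ℝ} (hf : Integrable f P) {s : Set Ω} {B M : ℝ}
    (hM : 0 ≤ M) (hs : ∀ ω ∈ s, f ω ≤ B) (hf_le : ∀ ω, f ω ≤ B + M) :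
    ∫ ω, f ω ∂P ≤ B + M * P.real sᶜ := by
  set S := toMeasurable P sᶜ
  have hS : MeasurableSet S := measurableSet_toMeasurable P _
  have hg : Integrable (fun ω => B + S.indicator (fun _ => M) ω) P :=
    (integrable_const B).add ((integrable_const M).indicator hS)
  have hfg : f ≤ fun ω => B + S.indicator (fun _ => M) ω := by
    intro ω
    by_cases hω : ω ∈ s
    · linarith [hs ω hω, Set.indicator_nonneg (fun _ _ => hM) ω (s := S)]
    · have hωS : ω ∈ S := subset_toMeasurable P sᶜ hω
      simpa only [Set.indicator_of_mem hωS] using hf_le ω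
  calc ∫ ω, f ω ∂P ≤ ∫ ω, B + S.indicator (fun _ => M) ω ∂P := integral_mono hf hg hfg
    _ = B + M * P.real sᶜ := by
      rw [integral_add (integrable_const B) ((integrable_const M).indicator hS),
        integral_const, integral_indicator_const _ hS, measureReal_def P S,
        measure_toMeasurable, ← measureReal_def]
      simp [mul_comm]

lemma mul_div_pow_succ_succ (x a : ℝ) (n : ℕ) : x * (a / x ^ (n + 2)) = a / x ^ (n + 1) := by
  rcases eq_or_ne x 0 with rfl | _
  · simp
  · field_simp
    ring

theorem stmt10_general {Ω A : Type*} [MeasureSpace Ω] [IsProbabilityMeasure (ℙ : Measure Ω)]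
    [Fintype A]
    (T : ℕ) (N : ℝ)
    (hN : N = (T : ℝ) ^ ((2 : ℝ) / 3) * (Real.log T) ^ ((1 : ℝ) / 3))
    (μ : A → ℝ) (astar : A) (hstar : ∀ a, μ a ≤ μ astar)
    (hrange : ∀ a, μ a ∈ Set.Icc (0 : ℝ) 1)
    (μhat : A → Ω → ℝ)
    (hKN : (Fintype.card A : ℝ) * N ≤ T)
    (CE : Set Ω)
    (hCEdef : CE = {ω | ∀ a, |μhat a ω - μ a| ≤ Real.sqrt (2 * Real.log T / N)})
    (hCEfail : ℙ CEᶜ ≤ ENNReal.ofReal (2 * (Fintype.card A : ℝ) / (T : ℝ) ^ 4))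
    (aselect : Ω → A)
    (hselect : ∀ ω, ∀ a, μhat a ω ≤ μhat (aselect ω) ω)
    (Reg : Ω → ℝ)
    (hRegdef : ∀ ω, Reg ω =
      N * (∑ a, (μ astar - μ a)) + ((T : ℝ) - (Fintype.card A : ℝ) * N) *
        (μ astar - μ (aselect ω)))
    (hint : Integrable Reg) :
    (∀ ω ∈ CE, Reg ω ≤
        (Fintype.card A : ℝ) * N + 2 * T * Real.sqrt (2 * Real.log T / N)) ∧
    ∫ ω, Reg ω ≤
        (Fintype.card A : ℝ) * N + 2 * T * Real.sqrt (2 * Real.log T / N)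
          + 2 * (Fintype.card A : ℝ) / (T : ℝ) ^ 3 := by
  set K := (Fintype.card A : ℝ)
  set ρ := Real.sqrt (2 * Real.log T / N)
  have hN0 : 0 ≤ N := hN ▸ by positivity
  have hclean : ∀ ω ∈ CE, Reg ω ≤ K * N + 2 * T * ρ := by
    intro ω hω
    rw [hCEdef] at hω
    rw [hRegdef, mul_assoc 2, mul_left_comm 2]
    exact regret_le_card_mul_add_mul hrange hN0 hKN (hstar _)
      (sub_le_two_mul_of_abs_sub_le_of_le (hω astar) (hω (aselect ω)) (hselect ω astar))
  have hReg_le (ω : Ω) : Reg ω ≤ K * N + 2 * T * ρ + T := by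
    have hgap_le_one : μ astar - μ (aselect ω) ≤ 1 := by
      linarith [(hrange astar).2, (hrange (aselect ω)).1]
    have := regret_le_card_mul_add_mul hrange hN0 hKN (hstar _) hgap_le_one
    have : 0 ≤ 2 * (T : ℝ) * ρ := by positivity
    rw [hRegdef]
    linarith
  have htail : (T : ℝ) * (ℙ : Measure Ω).real CEᶜ ≤ 2 * K / (T : ℝ) ^ 3 := by
    rw [← mul_div_pow_succ_succ]
    gcongr
    exact ENNReal.toReal_le_of_le_ofReal (by positivity) hCEfail
  refine ⟨hclean, ?_⟩
  grw [integral_le_add_mul_measureReal_compl hint (Nat.cast_nonneg T) hclean hReg_le, htail]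

/-- Uniform Exploration with per-arm budget `N = T^{2/3}(log T)^{1/3}` on a
`K`-armed bandit: each arm is explored `N` times and then the empirically best
arm `âsel` is played for the remaining `T − K·N` rounds. If the clean event
`CE` (each empirical mean within `ρ̄_N = √((2 log T)/N)` of the true mean) fails
with probability at most `2K/T⁴`, then (i) conditional on `CE` the regret
`N·∑_a Δ(a) + (T − K·N)·Δ(âsel)` is at most `K·N + 2T·ρ̄_N`, and (ii) the
expected regret is at most `K·N + 2T·ρ̄_N + 2K/T³`, which is
`O(T^{2/3}(log T)^{1/3})` with the failure term of order `o(T^{2/3})`. -/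
theorem stmt10 {Ω A : Type*} [MeasureSpace Ω] [IsProbabilityMeasure (ℙ : Measure Ω)]
    [Fintype A]
    (T : ℕ) (hT : 2 ≤ T) (N : ℝ)
    (hN : N = (T : ℝ) ^ ((2 : ℝ) / 3) * (Real.log T) ^ ((1 : ℝ) / 3))
    (μ : A → ℝ) (astar : A) (hstar : ∀ a, μ a ≤ μ astar)
    (hrange : ∀ a, μ a ∈ Set.Icc (0 : ℝ) 1)
    (μhat : A → Ω → ℝ)
    (hKN : (Fintype.card A : ℝ) * N ≤ T)
    (CE : Set Ω)
    (hCEdef : CE = {ω | ∀ a, |μhat a ω - μ a| ≤ Real.sqrt (2 * Real.log T / N)})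
    (hCEfail : ℙ CEᶜ ≤ ENNReal.ofReal (2 * (Fintype.card A : ℝ) / (T : ℝ) ^ 4))
    (aselect : Ω → A)
    (hselect : ∀ ω, ∀ a, μhat a ω ≤ μhat (aselect ω) ω)
    (Reg : Ω → ℝ)
    (hRegdef : ∀ ω, Reg ω =
      N * (∑ a, (μ astar - μ a)) + ((T : ℝ) - (Fintype.card A : ℝ) * N) *
        (μ astar - μ (aselect ω)))
    (hint : Integrable Reg) :
    (∀ ω ∈ CE, Reg ω ≤
        (Fintype.card A : ℝ) * N + 2 * T * Real.sqrt (2 * Real.log T / N)) ∧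
    ∫ ω, Reg ω ≤
        (Fintype.card A : ℝ) * N + 2 * T * Real.sqrt (2 * Real.log T / N)
          + 2 * (Fintype.card A : ℝ) / (T : ℝ) ^ 3 :=
  stmt10_general T N hN μ astar hstar hrange μhat hKN CE hCEdef hCEfail aselect hselect Reg hRegdef
    hint
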